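/- Let n ∈ ℕ and let q : ℕ → ℍ with constant coefficient q 0 = 0 or q 0 = 1, with derived polynomials f₁, f₂ and discriminant polynomial p̃ = f₁·f̄₁ + f₂·f̄₂. Suppose η ∈ ℂ is nonreal (Im η ≠ 0), p̃(η) = 0, and D := |f₁(η)|² + |f₂(η)|² ≠ 0. Then the quaternion ω = (1/D)·( |f₂(η)|²·η + |f₁(η)|²·(conj η) − 2·(Im η)·( f₂(η)·conj(f₁(η)) )·k ) — where each complex number w is identified with the quaternion w.re + w.im·i and all products are taken in ℍ — is a zero of p, i.e., ∑_{m=0}^{n} (q m)·ω^m = 0. -/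

import Mathlib

/-!
Write `a + b·j` for the quaternion with complex coordinates `a, b`, and put
`s = f₂(η) + conj (f₁(η))·j`, which is nonzero because `D ≠ 0`. A direct computation gives
`ω·s = s·η`, so `ω = s η s⁻¹` and `p(ω)·s = ∑ qₘ·s·ηᵐ`. Expanding `qₘ = t₁⁽ᵐ⁾ + t₂⁽ᵐ⁾·j`,
the `1`-coordinate of this sum is `f₂(η) f₁(η) − f₁(η) f₂(η) = 0` and its `j`-coordinate is
`conj (f₁(η)) f₁(conj η) + conj (f₂(η)) f₂(conj η) = conj (p̃(η)) = 0`; hence `p(ω) = 0`.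
-/

noncomputable section

/-- The quaternion `a + b·i` corresponding to the complex number `z = a + b·I`. -/
def cq (z : ℂ) : Quaternion ℝ := ⟨z.re, z.im, 0, 0⟩

/-- The quaternion imaginary unit `k`. -/
def qk : Quaternion ℝ := ⟨0, 0, 0, 1⟩

/-- Evaluation of the first derived polynomial `f₁(t) = ∑ t₁⁽ᵐ⁾ tᵐ`,
where `q m = t₁⁽ᵐ⁾ + t₂⁽ᵐ⁾·j` and `t₁⁽ᵐ⁾ = (q m).re + (q m).imI·I`. -/
def f1 (n : ℕ) (q : ℕ → Quaternion ℝ) (z : ℂ) : ℂ :=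
  ∑ m ∈ Finset.range (n + 1), (⟨(q m).re, (q m).imI⟩ : ℂ) * z ^ m

/-- Evaluation of the second derived polynomial `f₂(t) = ∑ t₂⁽ᵐ⁾ tᵐ`,
where `t₂⁽ᵐ⁾ = (q m).imJ + (q m).imK·I`. -/
def f2 (n : ℕ) (q : ℕ → Quaternion ℝ) (z : ℂ) : ℂ :=
  ∑ m ∈ Finset.range (n + 1), (⟨(q m).imJ, (q m).imK⟩ : ℂ) * z ^ m

/-- Evaluation of `f̄₁`, obtained from `f₁` by conjugating each coefficient. -/
def f1b (n : ℕ) (q : ℕ → Quaternion ℝ) (z : ℂ) : ℂ :=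
  ∑ m ∈ Finset.range (n + 1), (starRingEnd ℂ) (⟨(q m).re, (q m).imI⟩ : ℂ) * z ^ m

/-- Evaluation of `f̄₂`, obtained from `f₂` by conjugating each coefficient. -/
def f2b (n : ℕ) (q : ℕ → Quaternion ℝ) (z : ℂ) : ℂ :=
  ∑ m ∈ Finset.range (n + 1), (starRingEnd ℂ) (⟨(q m).imJ, (q m).imK⟩ : ℂ) * z ^ m

/-- Evaluation of the discriminant polynomial `p̃ = f₁·f̄₁ + f₂·f̄₂`. -/
def ptilde (n : ℕ) (q : ℕ → Quaternion ℝ) (z : ℂ) : ℂ :=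
  f1 n q z * f1b n q z + f2 n q z * f2b n q z

/-- The isolated zero `ω` associated to a nonreal root `η` of the discriminant polynomial,
in the case `D = |f₁(η)|² + |f₂(η)|² ≠ 0`:
`ω = (1/D)·(|f₂(η)|²·η + |f₁(η)|²·(conj η) − 2·(Im η)·(f₂(η)·conj(f₁(η)))·k)`. -/
def omega1 (n : ℕ) (q : ℕ → Quaternion ℝ) (η : ℂ) : Quaternion ℝ :=
  (((‖f1 n q η‖ ^ 2 + ‖f2 n q η‖ ^ 2)⁻¹ : ℝ) : Quaternion ℝ) *
    (((‖f2 n q η‖ ^ 2 : ℝ) : Quaternion ℝ) * cq η +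
     ((‖f1 n q η‖ ^ 2 : ℝ) : Quaternion ℝ) * cq ((starRingEnd ℂ) η) -
     ((2 * η.im : ℝ) : Quaternion ℝ) *
       (cq (f2 n q η * (starRingEnd ℂ) (f1 n q η)) * qk))

/-- The isolated zero `ω` associated to a nonreal root `η` of the discriminant polynomial,
in the case `D' = |f₁(conj η)|² + |f₂(conj η)|² ≠ 0`:
`ω = (1/D')·(|f₁(conj η)|²·η + |f₂(conj η)|²·(conj η) + 2·(Im η)·(f₂(conj η)·conj(f₁(conj η)))·k)`. -/
def omega2 (n : ℕ) (q : ℕ → Quaternion ℝ) (η : ℂ) : Quaternion ℝ :=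
  (((‖f1 n q ((starRingEnd ℂ) η)‖ ^ 2 +
      ‖f2 n q ((starRingEnd ℂ) η)‖ ^ 2)⁻¹ : ℝ) : Quaternion ℝ) *
    (((‖f1 n q ((starRingEnd ℂ) η)‖ ^ 2 : ℝ) : Quaternion ℝ) * cq η +
     ((‖f2 n q ((starRingEnd ℂ) η)‖ ^ 2 : ℝ) : Quaternion ℝ) * cq ((starRingEnd ℂ) η) +
     ((2 * η.im : ℝ) : Quaternion ℝ) *
       (cq (f2 n q ((starRingEnd ℂ) η) * (starRingEnd ℂ) (f1 n q ((starRingEnd ℂ) η))) * qk))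

open ComplexConjugate Quaternion

/-- The quaternion `a + b·j`. -/
def qpair (a b : ℂ) : ℍ := ⟨a.re, a.im, b.re, b.im⟩

@[simp] lemma qpair_re (a b : ℂ) : (qpair a b).re = a.re := rfl
@[simp] lemma qpair_imI (a b : ℂ) : (qpair a b).imI = a.im := rfl
@[simp] lemma qpair_imJ (a b : ℂ) : (qpair a b).imJ = b.re := rfl
@[simp] lemma qpair_imK (a b : ℂ) : (qpair a b).imK = b.im := rfl

lemma qpair_components (Q : ℍ) : qpair ⟨Q.re, Q.imI⟩ ⟨Q.imJ, Q.imK⟩ = Q := rfl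

lemma cq_eq_qpair (z : ℂ) : cq z = qpair z 0 := rfl

lemma qk_eq_qpair : qk = qpair 0 Complex.I := rfl

lemma qpair_eq_zero_iff {a b : ℂ} : qpair a b = 0 ↔ a = 0 ∧ b = 0 := by
  rw [Quaternion.ext_iff]
  simp [Complex.ext_iff, and_assoc]

lemma qpair_add (a b c d : ℂ) : qpair (a + c) (b + d) = qpair a b + qpair c d := by
  ext <;> simp

lemma qpair_sum {ι : Type*} (s : Finset ι) (a b : ι → ℂ) :
    qpair (∑ i ∈ s, a i) (∑ i ∈ s, b i) = ∑ i ∈ s, qpair (a i) (b i) := by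
  classical
  induction s using Finset.induction with
  | empty => rfl
  | insert i s hi ih => simp only [Finset.sum_insert hi, qpair_add, ih]

lemma qpair_mul_qpair (a b c d : ℂ) :
    qpair a b * qpair c d = qpair (a * c - b * conj d) (a * d + b * conj c) := by
  ext <;> simp [Complex.mul_re, Complex.mul_im] <;> ring

lemma cq_mul (z w : ℂ) : cq (z * w) = cq z * cq w := by
  simp [cq_eq_qpair, qpair_mul_qpair]

lemma cq_pow (z : ℂ) (m : ℕ) : cq (z ^ m) = cq z ^ m := by
  induction m with
  | zero => rfl
  | succ m ih => rw [pow_succ, cq_mul, ih, pow_succ]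

lemma conj_f1b (n : ℕ) (q : ℕ → ℍ) (z : ℂ) : conj (f1b n q z) = f1 n q (conj z) := by
  simp [f1b, f1, map_sum]

lemma conj_f2b (n : ℕ) (q : ℕ → ℍ) (z : ℂ) : conj (f2b n q z) = f2 n q (conj z) := by
  simp [f2b, f2, map_sum]

lemma conj_ptilde (n : ℕ) (q : ℕ → ℍ) (z : ℂ) :
    conj (ptilde n q z) = conj (f1 n q z) * f1 n q (conj z) + conj (f2 n q z) * f2 n q (conj z) := by
  simp only [ptilde, map_add, map_mul, conj_f1b, conj_f2b]

lemma sum_mul_qpair_mul_cq_pow (n : ℕ) (q : ℕ → ℍ) (a b z : ℂ) :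
    ∑ m ∈ Finset.range (n + 1), q m * (qpair a b * cq (z ^ m)) =
      qpair (a * f1 n q z - conj b * f2 n q z)
        (b * f1 n q (conj z) + conj a * f2 n q (conj z)) := by
  rw [f1, f2, f1, f2, Finset.mul_sum, Finset.mul_sum, Finset.mul_sum, Finset.mul_sum,
    ← Finset.sum_sub_distrib, ← Finset.sum_add_distrib, qpair_sum]
  refine Finset.sum_congr rfl fun m _ => ?_
  conv_lhs => rw [← qpair_components (q m)]
  rw [cq_eq_qpair, qpair_mul_qpair, qpair_mul_qpair]
  simp only [map_add, map_sub, map_mul, map_pow, map_zero, Complex.conj_conj]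
  congr 1 <;> ring

lemma omega_numerator_mul_qpair (u v z : ℂ) :
    (((‖v‖ ^ 2 : ℝ) : ℍ) * cq z + ((‖u‖ ^ 2 : ℝ) : ℍ) * cq (conj z) -
        ((2 * z.im : ℝ) : ℍ) * (cq (v * conj u) * qk)) * qpair v (conj u) =
      ((‖u‖ ^ 2 + ‖v‖ ^ 2 : ℝ) : ℍ) * (qpair v (conj u) * cq z) := by
  ext <;>
    simp [cq_eq_qpair, qk_eq_qpair, Quaternion.re_mul, Quaternion.imI_mul, Quaternion.imJ_mul,
      Quaternion.imK_mul, Complex.sq_norm, Complex.normSq_apply, Complex.mul_re, Complex.mul_im] <;>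
    ring

lemma omega1_mul_qpair (n : ℕ) (q : ℕ → ℍ) (η : ℂ)
    (hD : ‖f1 n q η‖ ^ 2 + ‖f2 n q η‖ ^ 2 ≠ 0) :
    omega1 n q η * qpair (f2 n q η) (conj (f1 n q η)) =
      qpair (f2 n q η) (conj (f1 n q η)) * cq η := by
  rw [omega1, mul_assoc, omega_numerator_mul_qpair, ← mul_assoc, ← Quaternion.coe_mul,
    inv_mul_cancel₀ hD, Quaternion.coe_one, one_mul]

theorem omega_formula_one_gives_zero_general
    (n : ℕ) (q : ℕ → Quaternion ℝ) (η : ℂ)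
    (hroot : ptilde n q η = 0)
    (hD : ‖f1 n q η‖ ^ 2 + ‖f2 n q η‖ ^ 2 ≠ 0) :
    ∑ m ∈ Finset.range (n + 1), q m * (omega1 n q η) ^ m = 0 := by
  set s := qpair (f2 n q η) (conj (f1 n q η))
  have hs : s ≠ 0 := by
    rw [Ne, qpair_eq_zero_iff, map_eq_zero]
    rintro ⟨h2, h1⟩
    exact hD (by simp [h1, h2])
  have hconj : ∀ m : ℕ, omega1 n q η ^ m * s = s * cq (η ^ m) := fun m => by
    rw [cq_pow]
    exact (SemiconjBy.pow_right (omega1_mul_qpair n q η hD).symm m).symm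
  have hsum : (∑ m ∈ Finset.range (n + 1), q m * omega1 n q η ^ m) * s = 0 := by
    simp_rw [Finset.sum_mul, mul_assoc, hconj]
    rw [sum_mul_qpair_mul_cq_pow, Complex.conj_conj, ← conj_ptilde, hroot, map_zero,
      mul_comm, sub_self, qpair_eq_zero_iff]
    exact ⟨rfl, rfl⟩
  exact (mul_eq_zero.mp hsum).resolve_right hs

/-- If `η` is a nonreal root of the discriminant polynomial `p̃` and
`D = |f₁(η)|² + |f₂(η)|² ≠ 0`, then the quaternion
`ω = (1/D)·(|f₂(η)|²·η + |f₁(η)|²·(conj η) − 2·(Im η)·(f₂(η)·conj(f₁(η)))·k)`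
is a zero of the simple quaternionic polynomial `p`. -/
theorem omega_formula_one_gives_zero
    (n : ℕ) (q : ℕ → Quaternion ℝ) (h0 : q 0 = 0 ∨ q 0 = 1) (η : ℂ)
    (hη : η.im ≠ 0) (hroot : ptilde n q η = 0)
    (hD : ‖f1 n q η‖ ^ 2 + ‖f2 n q η‖ ^ 2 ≠ 0) :
    ∑ m ∈ Finset.range (n + 1), q m * (omega1 n q η) ^ m = 0 :=
  omega_formula_one_gives_zero_general n q η hroot hD
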